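/- The 3×3 matrix B₃ with rows indexed by the Legendre polynomials P₀, P₁, P₂ and columns by the second-kind functions Q₁, Q₂, Q₃, whose entries are the cubed-Legendre boundary forms, namely B₃ = [[8, 0, 288], [0, 104, 0], [104, 0, 504]], is invertible (has nonzero determinant). -/
import Mathlib

/-- The 3×3 matrix `B₃` of cubed-Legendre boundary forms
`[P_j, Q_k]₃|_{−1}^{1}` for rows `P₀, P₁, P₂` and columns `Q₁, Q₂, Q₃`,
namely `[[8, 0, 288], [0, 104, 0], [104, 0, 504]]`, is invertible
(its determinant is nonzero). -/
theorem legendre_cube_B3_invertible :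
    (!![(8 : ℂ), 0, 288; 0, 104, 0; 104, 0, 504]).det ≠ 0 := by
  simp [Matrix.det_fin_three]
  norm_num
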